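/- Let ℱ be a regular thin family, L an infinite subset of ℕ and k a positive integer. Then for every finite partition of Bl_k(ℱ↾L) into finitely many pieces there exists an infinite subset L' of L such that Bl_k(ℱ↾L') is entirely contained in one piece of the partition. -/

import Mathlib

open Set Filter Topology

/-- `nth s i` is the `i`-th least element of the finite set `s`, 1-indexed
(junk value `0` if `i = 0` or `i > |s|`). -/
noncomputable def nth (s : Finset ℕ) (i : ℕ) : ℕ :=
  (s.sort (· ≤ ·)).getD (i - 1) 0

/-- Characteristic function of a finite subset of ℕ. -/
def charFun (s : Finset ℕ) : ℕ → Bool := fun n => decide (n ∈ s)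

/-- The topology on finite subsets of ℕ induced from the product topology on `{0,1}^ℕ`
via characteristic functions. -/
instance : TopologicalSpace (Finset ℕ) :=
  TopologicalSpace.induced charFun inferInstance

/-- A family of finite sets is compact if the corresponding set of characteristic
functions is compact in `{0,1}^ℕ`. -/
def CompactFam (F : Set (Finset ℕ)) : Prop := IsCompact (charFun '' F)

/-- Hereditary family: closed under subsets. -/
def Hereditary (F : Set (Finset ℕ)) : Prop := ∀ s ∈ F, ∀ t, t ⊆ s → t ∈ F

/-- Spreading family. -/
def Spreading (F : Set (Finset ℕ)) : Prop :=
  ∀ s ∈ F, ∀ t : Finset ℕ, t.card = s.card →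
    (∀ i, 1 ≤ i → i ≤ s.card → nth s i ≤ nth t i) → t ∈ F

/-- Regular family: compact, hereditary and spreading. -/
def RegularFam (F : Set (Finset ℕ)) : Prop := CompactFam F ∧ Hereditary F ∧ Spreading F

/-- `s` is an initial segment of `t` (possibly `s = t`). -/
def IsInitialSegment (s t : Finset ℕ) : Prop :=
  s ⊆ t ∧ ∀ a ∈ s, ∀ b ∈ t, b ∉ s → a < b

/-- Thin family: no element is a proper initial segment of another. -/
def ThinFam (F : Set (Finset ℕ)) : Prop :=
  ∀ s ∈ F, ∀ t ∈ F, IsInitialSegment s t → s = t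

/-- Regular thin family: the set of maximal elements (under inclusion) of some
regular family. -/
def RegularThin (F : Set (Finset ℕ)) : Prop :=
  ∃ R : Set (Finset ℕ), RegularFam R ∧ F = {s ∈ R | ∀ t ∈ R, s ⊆ t → s = t}

/-- The closure `ℱ̂` of a family: all subsets of its elements. -/
def closureFam (F : Set (Finset ℕ)) : Set (Finset ℕ) := {s | ∃ t ∈ F, s ⊆ t}

/-- Restriction `ℱ↾L` of a family to the range of `L : ℕ → ℕ`. -/
def restrict (F : Set (Finset ℕ)) (L : ℕ → ℕ) : Set (Finset ℕ) :=
  {s ∈ F | ↑s ⊆ Set.range L}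

/-- The order `o(ℱ)` of a regular thin family: the rank of `ℱ̂` partially ordered by
reverse inclusion; equivalently, the rank of `∅` for the relation in which the
predecessors of `t` are its strict supersets in `ℱ̂`.  (Junk value `0` if the relation
is not well-founded or `∅ ∉ ℱ̂`.) -/
noncomputable def famOrder (F : Set (Finset ℕ)) : Ordinal := by
  classical
  exact if h : WellFounded (fun s t : closureFam F => (t : Finset ℕ) ⊂ (s : Finset ℕ)) then
    (if he : (∅ : Finset ℕ) ∈ closureFam F then (h.apply (⟨∅, he⟩ : closureFam F)).rank else 0)
  else 0

/-- Plegma family of length `l` (given as the first `l` terms of `s`). -/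
def IsPlegma (l : ℕ) (s : ℕ → Finset ℕ) : Prop :=
  (∀ i < l, (s i).Nonempty) ∧
  (∀ i j, i < j → j < l → ∀ k, 1 ≤ k → k ≤ min (s i).card (s j).card →
      nth (s i) k < nth (s j) k) ∧
  (∀ i < l, ∀ j < l, ∀ k, 1 ≤ k → k ≤ min (s i).card ((s j).card - 1) →
      nth (s i) k < nth (s j) (k + 1))

/-- The finitely supported vector `∑_{j<l} a_j e_j` in `c00 = ℕ →₀ ℝ`. -/
noncomputable def comb (a : ℕ → ℝ) (l : ℕ) : ℕ →₀ ℝ :=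
  ∑ j ∈ Finset.range l, Finsupp.single j (a j)

variable {X : Type*} [NormedAddCommGroup X] [NormedSpace ℝ X]

/-- The `ℱ`-subsequence `(x_s)_{s ∈ ℱ↾M}` generates the sequence represented by the
seminorm `ρ` on `c00` as an `ℱ`-spreading model, with respect to `(δ_n)`.
Here `M : ℕ → ℕ` is the (0-indexed) increasing enumeration of an infinite set. -/
def Generates (F : Set (Finset ℕ)) (M : ℕ → ℕ) (x : Finset ℕ → X) (δ : ℕ → ℝ)
    (ρ : Seminorm ℝ (ℕ →₀ ℝ)) : Prop :=
  ∀ k l : ℕ, 1 ≤ k → k ≤ l → ∀ a : ℕ → ℝ, (∀ j, |a j| ≤ 1) →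
    ∀ s : ℕ → Finset ℕ, (∀ j < k, s j ∈ restrict F M) → IsPlegma k s →
      M l ≤ nth (s 0) 1 →
      |‖∑ j ∈ Finset.range k, a j • x (s j)‖ - ρ (comb a k)| ≤ δ l

/-- Joint `ℱ`-model generated by a `k`-tuple `(x^0, …, x^{k-1})` of `ℱ`-sequences;
`x^{i_k(j)}` (1-indexed) corresponds to `x (j % k)` (0-indexed). -/
def JointGenerates (F : Set (Finset ℕ)) (k : ℕ) (x : ℕ → Finset ℕ → X) (M : ℕ → ℕ)
    (δ : ℕ → ℝ) (ρ : Seminorm ℝ (ℕ →₀ ℝ)) : Prop :=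
  ∀ m n : ℕ, 1 ≤ m → m ≤ n → ∀ a : ℕ → ℝ, (∀ j, |a j| ≤ 1) →
    ∀ s : ℕ → Finset ℕ, (∀ j < m, s j ∈ restrict F M) → IsPlegma m s →
      M n ≤ nth (s 0) 1 →
      |‖∑ j ∈ Finset.range m, a j • x (j % k) (s j)‖ - ρ (comb a m)| ≤ δ n

/-- The `ℱ`-subsequence `(x_s)_{s∈ℱ↾L}` is subordinated: `x` extends to a map on
`ℱ̂↾L` that is continuous into `X` with its weak topology. -/
def Subordinated (F : Set (Finset ℕ)) (L : ℕ → ℕ) (x : Finset ℕ → X) : Prop :=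
  ∃ φ : Finset ℕ → X,
    Continuous (fun t : {t // t ∈ closureFam F ∧ ↑t ⊆ Set.range L} =>
      (φ (t : Finset ℕ) : WeakSpace ℝ X)) ∧
    ∀ s ∈ restrict F L, φ s = x s

/-- The `ℱ`-subsequence `(x_s)_{s∈ℱ↾L}` is weakly null. -/
def WeaklyNull (F : Set (Finset ℕ)) (L : ℕ → ℕ) (x : Finset ℕ → X) : Prop :=
  ∀ f : X →L[ℝ] ℝ, ∀ ε : ℝ, 0 < ε → ∃ n₀ : ℕ,
    ∀ s ∈ restrict F L, n₀ ≤ nth s 1 → |f (x s)| < ε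

/-- `(δ_n)` is a null sequence of positive reals. -/
def NullPos (δ : ℕ → ℝ) : Prop :=
  (∀ n, 0 < δ n) ∧ Tendsto δ atTop (𝓝 0)

/-- `SM_ξ^w(X)`: `ρ` represents a `ξ`-order spreading model of `X` generated by a
subordinated weakly null `ℱ`-subsequence, for some regular thin `ℱ` of order `ξ`. -/
def SMw (ξ : Ordinal) (X : Type*) [NormedAddCommGroup X] [NormedSpace ℝ X]
    (ρ : Seminorm ℝ (ℕ →₀ ℝ)) : Prop :=
  ∃ F : Set (Finset ℕ), RegularThin F ∧ famOrder F = ξ ∧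
    ∃ M : ℕ → ℕ, StrictMono M ∧ ∃ x : Finset ℕ → X, ∃ δ : ℕ → ℝ, NullPos δ ∧
      Subordinated F M x ∧ WeaklyNull F M x ∧ Generates F M x δ ρ

/-- `ρ₁` is `C`-dominated by `ρ₂`. -/
def DominatedBy (C : ℝ) (ρ₁ ρ₂ : Seminorm ℝ (ℕ →₀ ℝ)) : Prop :=
  ∀ v : ℕ →₀ ℝ, ρ₁ v ≤ C * ρ₂ v

/-- Domination `ρ₁ ⪯ ρ₂`. -/
def Dom (ρ₁ ρ₂ : Seminorm ℝ (ℕ →₀ ℝ)) : Prop := ∃ C : ℝ, 0 < C ∧ DominatedBy C ρ₁ ρ₂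

/-- Equivalence `ρ₁ ∼ ρ₂`. -/
def EquivSeq (ρ₁ ρ₂ : Seminorm ℝ (ℕ →₀ ℝ)) : Prop := Dom ρ₁ ρ₂ ∧ Dom ρ₂ ρ₁

/-- Strict domination `ρ₁ ≺ ρ₂`. -/
def SDom (ρ₁ ρ₂ : Seminorm ℝ (ℕ →₀ ℝ)) : Prop := Dom ρ₁ ρ₂ ∧ ¬ EquivSeq ρ₁ ρ₂

/-- The image family `L(ℱ) = {L(s) : s ∈ ℱ}`. -/
def mapFam (L : ℕ → ℕ) (F : Set (Finset ℕ)) : Set (Finset ℕ) := (fun s => s.image L) '' F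

/-- `ℋ₁ ⊑ ℋ₂`: every element of `ℋ₁` is an initial segment of an element of `ℋ₂`,
and every element of `ℋ₂` has an initial segment in `ℋ₁`. -/
def Sqsubseteq (H1 H2 : Set (Finset ℕ)) : Prop :=
  (∀ s ∈ H1, ∃ t ∈ H2, IsInitialSegment s t) ∧ (∀ t ∈ H2, ∃ s ∈ H1, IsInitialSegment s t)

/-- The regular thin family of singletons of ℕ (of order 1). -/
def singFam : Set (Finset ℕ) := {s : Finset ℕ | s.card = 1}

/-- The set `[ℕ]^∞` of infinite subsets of ℕ. -/
def NatInf : Type := {S : Set ℕ // S.Infinite}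

/-- `[ℕ]^∞` is topologized as a subspace of `{0,1}^ℕ` via characteristic functions. -/
noncomputable instance : TopologicalSpace NatInf :=
  TopologicalSpace.induced
    (fun S : NatInf => fun n : ℕ => @decide (n ∈ S.1) (Classical.dec _)) inferInstance

/-- The (0-indexed) increasing enumeration of an infinite subset of ℕ. -/
noncomputable def enumInf (S : NatInf) (j : ℕ) : ℕ := Nat.nth (· ∈ S.1) j

/-!
Nash-Williams' theorem (every thin family is Ramsey), proved by Galvin–Prikry combinatorial
forcing, applied to the concatenations of block sequences.

Fix a family `B`. An infinite `M` accepts a finite `s` if for every infinite `N ⊆ M` lying above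
`s`, the set `s ∪ N` has an initial segment in `B`; it rejects `s` if no infinite subset of `M`
accepts `s`. Both notions only depend on the part of `M` above `s`, so a fusion argument gives an
infinite `M` deciding every finite subset of itself. If `M` accepts `∅`, then every `u ∈ ℱ↾M` is
comparable with an initial segment of `u ∪ M` lying in `B ∩ ℱ`, and thinness puts `u` in `B`.
If `M` rejects `s`, it accepts `s ∪ {x}` for only finitely many `x`, so a second fusion yields an
infinite `N ⊆ M` all of whose finite subsets are rejected by `M`, whence `ℱ↾N` misses `B`.

Concatenation `(s_1, …, s_k) ↦ s_1 ∪ ⋯ ∪ s_k` is injective on `Bl_k(ℱ)` and has thin image,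
because a block sequence of a thin family is recovered block by block from any initial segment
of a concatenation.
-/

def IsInitialSegmentOf (t : Finset ℕ) (X : Set ℕ) : Prop :=
  ↑t ⊆ X ∧ ∀ n ∈ X, n ∉ t → ∀ a ∈ t, a < n

lemma isInitialSegment_iff_isInitialSegmentOf {s t : Finset ℕ} :
    IsInitialSegment s t ↔ IsInitialSegmentOf s ↑t := by
  simp only [IsInitialSegment, IsInitialSegmentOf, Finset.coe_subset, Finset.mem_coe]
  exact and_congr_right' ⟨fun h n hn hns a ha => h a ha n hn hns,
    fun h a ha n hn hns => h n hn hns a ha⟩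

lemma IsInitialSegment.trans_isInitialSegmentOf {s t : Finset ℕ} {X : Set ℕ}
    (hst : IsInitialSegment s t) (htX : IsInitialSegmentOf t X) : IsInitialSegmentOf s X := by
  refine ⟨(Finset.coe_subset.mpr hst.1).trans htX.1, fun n hn hns a ha => ?_⟩
  by_cases hnt : n ∈ t
  · exact hst.2 a ha n hnt hns
  · exact htX.2 n hn hnt a (hst.1 ha)

lemma IsInitialSegmentOf.isInitialSegment_or {s t : Finset ℕ} {X : Set ℕ}
    (hs : IsInitialSegmentOf s X) (ht : IsInitialSegmentOf t X) :
    IsInitialSegment s t ∨ IsInitialSegment t s := by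
  have hsub : s ⊆ t ∨ t ⊆ s := by
    by_contra! h
    obtain ⟨a, has, hat⟩ := Finset.not_subset.mp h.1
    obtain ⟨b, hbt, hbs⟩ := Finset.not_subset.mp h.2
    exact lt_asymm (hs.2 b (ht.1 hbt) hbs a has) (ht.2 a (hs.1 has) hat b hbt)
  rcases hsub with h | h
  · exact Or.inl ⟨h, fun a ha b hb hbs => hs.2 b (ht.1 hb) hbs a ha⟩
  · exact Or.inr ⟨h, fun a ha b hb hbt => ht.2 b (hs.1 hb) hbt a ha⟩

lemma IsInitialSegment.sdiff {u w : Finset ℕ} (h : IsInitialSegment u w) (a : Finset ℕ) :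
    IsInitialSegment (u \ a) (w \ a) := by
  refine ⟨Finset.sdiff_subset_sdiff h.1 subset_rfl, fun x hx y hy hyu => ?_⟩
  rw [Finset.mem_sdiff] at hx hy
  exact h.2 x hx.1 y hy.1 fun hyu' => hyu (Finset.mem_sdiff.mpr ⟨hyu', hy.2⟩)

lemma ThinFam.eq_of_isInitialSegmentOf {F : Set (Finset ℕ)} (hF : ThinFam F)
    {s t : Finset ℕ} {X : Set ℕ} (hs : s ∈ F) (ht : t ∈ F)
    (hsX : IsInitialSegmentOf s X) (htX : IsInitialSegmentOf t X) : s = t := by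
  rcases hsX.isInitialSegment_or htX with h | h
  exacts [hF s hs t ht h, (hF t ht s hs h).symm]

lemma RegularThin.thinFam {F : Set (Finset ℕ)} (hF : RegularThin F) : ThinFam F := by
  obtain ⟨R, -, rfl⟩ := hF
  exact fun s hs t ht hst => hs.2 t ht.1 hst.1

namespace NashWilliams

def above (s : Finset ℕ) (M : Set ℕ) : Set ℕ := {n ∈ M | ∀ a ∈ s, a < n}

lemma above_subset (s : Finset ℕ) (M : Set ℕ) : above s M ⊆ M := fun _ h => h.1

lemma above_mono {M N : Set ℕ} (h : N ⊆ M) (s : Finset ℕ) : above s N ⊆ above s M :=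
  fun _ hn => ⟨h hn.1, hn.2⟩

lemma above_empty (M : Set ℕ) : above ∅ M = M := by
  ext; simp [above]

lemma infinite_above {M : Set ℕ} (hM : M.Infinite) (s : Finset ℕ) : (above s M).Infinite := by
  refine (hM.sdiff (Set.finite_Iic (s.sup id))).mono fun n hn => ⟨hn.1, fun a ha => ?_⟩
  exact (Finset.le_sup (f := id) ha).trans_lt (not_le.mp hn.2)

section Fusion

variable {L : Set ℕ} (Q : Finset ℕ → Set ℕ → Prop)
  (hQ : ∀ s M N, Q s M → above s N ⊆ M → Q s N)
  (hdense : ∀ s, ∀ M ⊆ L, M.Infinite → ∃ N ⊆ M, N.Infinite ∧ Q s N)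

include hQ hdense in
lemma exists_forall_mem_finset (S : Finset (Finset ℕ)) :
    ∀ M ⊆ L, M.Infinite → ∃ N ⊆ M, N.Infinite ∧ ∀ s ∈ S, Q s N := by
  induction S using Finset.induction_on with
  | empty => exact fun M _ hM => ⟨M, subset_rfl, hM, by simp⟩
  | insert a S _ ih =>
    intro M hML hM
    obtain ⟨N, hNM, hN, hNS⟩ := ih M hML hM
    obtain ⟨N', hN'N, hN', hN'a⟩ := hdense a N (hNM.trans hML) hN
    refine ⟨N', hN'N.trans hNM, hN', fun s hs => ?_⟩
    rcases Finset.mem_insert.mp hs with rfl | hs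
    · exact hN'a
    · exact hQ s N N' (hNS s hs) ((above_subset _ _).trans hN'N)

include hQ hdense in
/-- Fusion: `M` is `{m₁ < m₂ < ⋯}` where `mₙ = min Mₙ`, `M₀ = L`, and `Mₙ₊₁ ⊆ Mₙ` lies above
`mₙ` and satisfies `Q s` for every `s ⊆ {0, …, mₙ}`. -/
theorem exists_infinite_forall_subset (hL : L.Infinite) :
    ∃ M ⊆ L, M.Infinite ∧ ∀ s : Finset ℕ, ↑s ⊆ M → Q s M := by
  have step : ∀ M : {M : Set ℕ // M ⊆ L ∧ M.Infinite}, ∃ N : {M : Set ℕ // M ⊆ L ∧ M.Infinite},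
      N.1 ⊆ above {sInf M.1} M.1 ∧ ∀ s ⊆ Finset.range (sInf M.1 + 1), Q s N.1 := by
    rintro ⟨M, hML, hM⟩
    obtain ⟨N, hNM, hN, hNQ⟩ := exists_forall_mem_finset Q hQ hdense
      (Finset.range (sInf M + 1)).powerset _ ((above_subset _ _).trans hML) (infinite_above hM _)
    exact ⟨⟨N, hNM.trans ((above_subset _ _).trans hML), hN⟩, hNM,
      fun s hs => hNQ s (Finset.mem_powerset.mpr hs)⟩
  choose g hg using step
  set seq : ℕ → {M : Set ℕ // M ⊆ L ∧ M.Infinite} := fun n => g^[n] ⟨L, subset_rfl, hL⟩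
  set m : ℕ → ℕ := fun n => sInf (seq n).1
  have hsucc : ∀ n, seq (n + 1) = g (seq n) := fun n => Function.iterate_succ_apply' g n _
  have hmem : ∀ n, m n ∈ (seq n).1 := fun n => Nat.sInf_mem (seq n).2.2.nonempty
  have hanti : Antitone fun n => (seq n).1 := antitone_nat_of_succ_le fun n => by
    rw [hsucc]; exact (hg _).1.trans (above_subset _ _)
  have hm : StrictMono m := strictMono_nat_of_lt_succ fun n => by
    have := (hg (seq n)).1 (hsucc n ▸ hmem (n + 1))
    exact this.2 _ (Finset.mem_singleton_self _)
  have hQseq : ∀ n, ∀ s ⊆ Finset.range (m n + 1), Q s (seq (n + 1)).1 := fun n => by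
    rw [hsucc]; exact (hg _).2
  refine ⟨range fun n => m (n + 1), ?_, infinite_range_of_injective
    (hm.injective.comp Nat.succ_injective), fun s hs => ?_⟩
  · rintro _ ⟨n, rfl⟩
    exact (seq (n + 1)).2.1 (hmem (n + 1))
  have htail : ∀ i, ∀ j, m i < m (j + 1) → m (j + 1) ∈ (seq (i + 1)).1 := fun i j h =>
    hanti (Nat.succ_le_of_lt (hm.lt_iff_lt.mp h)) (hmem (j + 1))
  obtain ⟨i, hsi, hi⟩ : ∃ i, s ⊆ Finset.range (m i + 1) ∧
      ∀ x ∈ above s (range fun n => m (n + 1)), m i < x := by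
    rcases s.eq_empty_or_nonempty with rfl | hne
    · exact ⟨0, Finset.empty_subset _, fun _ ⟨⟨j, hj⟩, _⟩ => hj ▸ hm (Nat.succ_pos j)⟩
    · obtain ⟨i, hi⟩ := hs (s.max'_mem hne)
      dsimp only at hi
      refine ⟨i + 1, fun a ha => Finset.mem_range.mpr (Nat.lt_succ_of_le ?_), fun x hx => ?_⟩
      · rw [hi]; exact s.le_max' a ha
      · rw [hi]; exact hx.2 _ (s.max'_mem hne)
  refine hQ s _ _ (hQseq i s hsi) fun x hx => ?_
  obtain ⟨j, rfl⟩ := hx.1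
  exact htail i j (hi _ hx)

end Fusion

def Accepts (B : Set (Finset ℕ)) (s : Finset ℕ) (M : Set ℕ) : Prop :=
  ∀ N ⊆ above s M, N.Infinite → ∃ t ∈ B, IsInitialSegmentOf t (↑s ∪ N)

def Rejects (B : Set (Finset ℕ)) (s : Finset ℕ) (M : Set ℕ) : Prop :=
  ∀ N ⊆ M, N.Infinite → ¬ Accepts B s N

def Decides (B : Set (Finset ℕ)) (s : Finset ℕ) (M : Set ℕ) : Prop :=
  Accepts B s M ∨ Rejects B s M

variable {B : Set (Finset ℕ)} {s : Finset ℕ} {M N : Set ℕ}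

lemma Accepts.of_above_subset (h : Accepts B s M) (hN : above s N ⊆ M) : Accepts B s N :=
  fun N' hN' => h N' fun _ hn => ⟨hN (hN' hn), (hN' hn).2⟩

lemma Rejects.of_above_subset (h : Rejects B s M) (hN : above s N ⊆ M) : Rejects B s N :=
  fun N' hN' hinf hacc => h (above s N') ((above_mono hN' s).trans hN) (infinite_above hinf s)
    (hacc.of_above_subset ((above_subset _ _).trans (above_subset _ _)))

lemma Decides.of_above_subset (h : Decides B s M) (hN : above s N ⊆ M) : Decides B s N :=
  h.imp (·.of_above_subset hN) (·.of_above_subset hN)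

lemma exists_decides (hM : M.Infinite) : ∃ N ⊆ M, N.Infinite ∧ Decides B s N := by
  by_cases h : Rejects B s M
  · exact ⟨M, subset_rfl, hM, Or.inr h⟩
  · simp only [Rejects, not_forall, not_not] at h
    obtain ⟨N, hNM, hN, hacc⟩ := h
    exact ⟨N, hNM, hN, Or.inl hacc⟩

lemma accepts_of_mem (h : s ∈ B) : Accepts B s M :=
  fun _ hN _ => ⟨s, h, subset_union_left, fun _ hn hns a ha => (hN (hn.resolve_left hns)).2 a ha⟩

lemma Rejects.finite_setOf_accepts_insert (h : Rejects B s M) :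
    {x | x ∈ above s M ∧ Accepts B (insert x s) M}.Finite := by
  by_contra hA
  refine h _ (fun x hx => hx.1.1) hA fun N hN hNinf => ?_
  set x := sInf N
  have hxN : x ∈ N := Nat.sInf_mem hNinf.nonempty
  have hNx : N \ {x} ⊆ above (insert x s) M := fun n hn => by
    refine ⟨(hN hn.1).1.1.1, fun a ha => ?_⟩
    rcases Finset.mem_insert.mp ha with rfl | ha
    · exact (Nat.sInf_le hn.1).lt_of_ne (Ne.symm hn.2)
    · exact (hN hn.1).2 a ha
  obtain ⟨t, htB, ht⟩ := (hN hxN).1.2 _ hNx (hNinf.sdiff (finite_singleton x))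
  refine ⟨t, htB, ?_⟩
  have hunion : ↑(insert x s) ∪ N \ {x} = ↑s ∪ N := by
    ext n; by_cases hn : n = x <;> simp [hn, hxN]
  rwa [hunion] at ht

lemma forall_mem_of_accepts_empty {F : Set (Finset ℕ)} (hF : ThinFam F)
    (h : Accepts (B ∩ F) ∅ M) (hM : M.Infinite) : ∀ u ∈ F, ↑u ⊆ M → u ∈ B := by
  intro u hu huM
  obtain ⟨t, ⟨htB, htF⟩, htX⟩ := h (↑u ∪ above u M)
    (by rw [above_empty]; exact union_subset huM (above_subset _ _))
    ((infinite_above hM u).mono subset_union_right)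
  rw [Finset.coe_empty, empty_union] at htX
  have huX : IsInitialSegmentOf u (↑u ∪ above u M) :=
    ⟨subset_union_left, fun n hn hnu a ha => (hn.resolve_left hnu).2 a ha⟩
  rwa [hF.eq_of_isInitialSegmentOf hu htF huX htX]

lemma exists_forall_subset_rejects (hM : M.Infinite)
    (hdec : ∀ s : Finset ℕ, ↑s ⊆ M → Decides B s M) (h₀ : Rejects B ∅ M) :
    ∃ N ⊆ M, N.Infinite ∧ ∀ s : Finset ℕ, ↑s ⊆ N → Rejects B s M := by
  obtain ⟨N, hNM, hN, hNQ⟩ := exists_infinite_forall_subset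
    (fun s N => Rejects B s M → ∀ x ∈ above s N, ¬ Accepts B (insert x s) M)
    (fun _ _ _ h hsub hrej x hx => h hrej x ⟨hsub hx, hx.2⟩)
    (fun s N hNM hN => by
      by_cases hrej : Rejects B s M
      · refine ⟨_, sdiff_subset, hN.sdiff hrej.finite_setOf_accepts_insert, fun _ x hx hacc => ?_⟩
        exact hx.1.2 ⟨⟨hNM hx.1.1, hx.2⟩, hacc⟩
      · exact ⟨N, subset_rfl, hN, fun h => absurd h hrej⟩) hM
  refine ⟨N, hNM, hN, fun s => Finset.induction_on_max s (fun _ => h₀) fun a s has ih hsub => ?_⟩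
  have hsN : ↑s ⊆ N := (Finset.coe_subset.mpr (Finset.subset_insert a s)).trans hsub
  have haN : a ∈ above s N := ⟨hsub (Finset.mem_insert_self a s), has⟩
  exact (hdec _ (hsub.trans hNM)).resolve_left (hNQ s hsN (ih hsN) a haN)

end NashWilliams

open NashWilliams in
theorem ThinFam.exists_infinite_forall_mem_or_forall_not_mem {F : Set (Finset ℕ)}
    (hF : ThinFam F) (B : Set (Finset ℕ)) {L : Set ℕ} (hL : L.Infinite) :
    ∃ M ⊆ L, M.Infinite ∧ ((∀ u ∈ F, ↑u ⊆ M → u ∈ B) ∨ ∀ u ∈ F, ↑u ⊆ M → u ∉ B) := by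
  obtain ⟨M, hML, hM, hdec⟩ := exists_infinite_forall_subset (Decides (B ∩ F))
    (fun _ _ _ h => h.of_above_subset) (fun _ _ _ => exists_decides) hL
  rcases hdec ∅ (by simp) with hacc | hrej
  · exact ⟨M, hML, hM, Or.inl (forall_mem_of_accepts_empty hF hacc hM)⟩
  · obtain ⟨N, hNM, hN, hNrej⟩ := exists_forall_subset_rejects hM hdec hrej
    exact ⟨N, hNM.trans hML, hN,
      Or.inr fun u hu huN huB => hNrej u huN M subset_rfl hM (accepts_of_mem ⟨huB, hu⟩)⟩

theorem ThinFam.exists_infinite_forall_eq {F : Set (Finset ℕ)} (hF : ThinFam F) {ι : Type*}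
    (c : Finset ℕ → ι) {S : Finset ι} (hS : S.Nonempty) :
    ∀ {L : Set ℕ}, L.Infinite → (∀ u ∈ F, ↑u ⊆ L → c u ∈ S) →
      ∃ M ⊆ L, M.Infinite ∧ ∃ i ∈ S, ∀ u ∈ F, ↑u ⊆ M → c u = i := by
  induction hS using Finset.Nonempty.cons_induction with
  | singleton a =>
    exact fun {L} hL hc => ⟨L, subset_rfl, hL, a, Finset.mem_singleton_self a,
      fun u hu huL => Finset.mem_singleton.mp (hc u hu huL)⟩
  | cons a S ha hS ih =>
    intro L hL hc
    obtain ⟨M, hML, hM, hall | hnone⟩ :=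
      hF.exists_infinite_forall_mem_or_forall_not_mem {u | c u = a} hL
    · exact ⟨M, hML, hM, a, Finset.mem_cons_self a S, hall⟩
    · obtain ⟨N, hNM, hN, i, hi, hNi⟩ := ih hM fun u hu huM =>
        (Finset.mem_cons.mp (hc u hu (huM.trans hML))).resolve_left (hnone u hu huM)
      exact ⟨N, hNM.trans hML, hN, i, Finset.mem_cons_of_mem hi, hNi⟩

def IsBlockSeq {k : ℕ} (s : Fin k → Finset ℕ) : Prop :=
  ∀ i j, i < j → ∀ a ∈ s i, ∀ b ∈ s j, a < b

def blockSeqs (F : Set (Finset ℕ)) (k : ℕ) : Set (Fin k → Finset ℕ) :=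
  {s | (∀ j, s j ∈ F) ∧ IsBlockSeq s}

lemma Fin.biUnion_univ_succ {k : ℕ} (s : Fin (k + 1) → Finset ℕ) :
    Finset.univ.biUnion s = s 0 ∪ Finset.univ.biUnion (Fin.tail s) := by
  ext; simp [Fin.exists_fin_succ, Fin.tail]

namespace IsBlockSeq

variable {k : ℕ} {s : Fin (k + 1) → Finset ℕ}

lemma tail (h : IsBlockSeq s) : IsBlockSeq (Fin.tail s) :=
  fun i j hij => h i.succ j.succ (Fin.succ_lt_succ_iff.mpr hij)

lemma isInitialSegment_head (h : IsBlockSeq s) :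
    IsInitialSegment (s 0) (Finset.univ.biUnion s) := by
  refine ⟨Finset.subset_biUnion_of_mem s (Finset.mem_univ 0), fun a ha b hb hb0 => ?_⟩
  obtain ⟨j, -, hbj⟩ := Finset.mem_biUnion.mp hb
  have hj : j ≠ 0 := by rintro rfl; exact hb0 hbj
  exact h 0 j (Fin.pos_iff_ne_zero.mpr hj) a ha b hbj

lemma biUnion_tail (h : IsBlockSeq s) :
    Finset.univ.biUnion (Fin.tail s) = Finset.univ.biUnion s \ s 0 := by
  rw [Fin.biUnion_univ_succ, Finset.union_sdiff_cancel_left]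
  refine Finset.disjoint_left.mpr fun a ha hat => ?_
  obtain ⟨j, -, haj⟩ := Finset.mem_biUnion.mp hat
  exact lt_irrefl a (h 0 j.succ (Fin.succ_pos j) a ha a haj)

end IsBlockSeq

theorem ThinFam.eq_of_isInitialSegment_biUnion {F : Set (Finset ℕ)} (hF : ThinFam F) :
    ∀ {k : ℕ} {s t : Fin k → Finset ℕ}, s ∈ blockSeqs F k → t ∈ blockSeqs F k →
      IsInitialSegment (Finset.univ.biUnion s) (Finset.univ.biUnion t) → s = t
  | 0, _, _, _, _, _ => Subsingleton.elim _ _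
  | k + 1, s, t, ⟨hsF, hs⟩, ⟨htF, ht⟩, h => by
    have h₀ : s 0 = t 0 := hF.eq_of_isInitialSegmentOf (hsF 0) (htF 0)
      (hs.isInitialSegment_head.trans_isInitialSegmentOf
        (isInitialSegment_iff_isInitialSegmentOf.mp h))
      (isInitialSegment_iff_isInitialSegmentOf.mp ht.isInitialSegment_head)
    have htail : Fin.tail s = Fin.tail t :=
      hF.eq_of_isInitialSegment_biUnion ⟨fun j => hsF j.succ, hs.tail⟩
        ⟨fun j => htF j.succ, ht.tail⟩
        (by rw [hs.biUnion_tail, ht.biUnion_tail, ← h₀]; exact h.sdiff _)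
    rw [← Fin.cons_self_tail s, ← Fin.cons_self_tail t, h₀, htail]

lemma ThinFam.injOn_biUnion {F : Set (Finset ℕ)} (hF : ThinFam F) (k : ℕ) :
    InjOn (fun s : Fin k → Finset ℕ => Finset.univ.biUnion s) (blockSeqs F k) := fun s hs t ht h =>
  hF.eq_of_isInitialSegment_biUnion hs ht (by
    dsimp only at h; rw [h]; exact ⟨subset_rfl, fun _ _ _ hb hb' => absurd hb hb'⟩)

lemma ThinFam.image_biUnion {F : Set (Finset ℕ)} (hF : ThinFam F) (k : ℕ) :
    ThinFam ((fun s : Fin k → Finset ℕ => Finset.univ.biUnion s) '' blockSeqs F k) := by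
  rintro _ ⟨s, hs, rfl⟩ _ ⟨t, ht, rfl⟩ h
  rw [hF.eq_of_isInitialSegment_biUnion hs ht h]

theorem statement17_general (F : Set (Finset ℕ)) (hF : RegularThin F)
    (L : ℕ → ℕ) (hL : StrictMono L) (k : ℕ)
    (p : ℕ) (col : (Fin k → Finset ℕ) → ℕ) (hcol : ∀ s, col s < p) :
    ∃ L' : ℕ → ℕ, StrictMono L' ∧ Set.range L' ⊆ Set.range L ∧
      ∃ i₀ < p, ∀ s : Fin k → Finset ℕ, (∀ j, s j ∈ restrict F L') →
        (∀ i j : Fin k, i < j → ∀ a ∈ s i, ∀ b ∈ s j, a < b) →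
        col s = i₀ := by
  set cat : (Fin k → Finset ℕ) → Finset ℕ := fun s => Finset.univ.biUnion s
  have hinj := hF.thinFam.injOn_biUnion k
  obtain ⟨M, hML, hM, i₀, hi₀, hMi₀⟩ := (hF.thinFam.image_biUnion k).exists_infinite_forall_eq
    (col ∘ Function.invFunOn cat (blockSeqs F k)) (S := Finset.range p)
    ⟨_, Finset.mem_range.mpr (hcol fun _ => ∅)⟩ (infinite_range_of_injective hL.injective)
    fun _ _ _ => Finset.mem_range.mpr (hcol _)
  have hrange : range (Nat.nth (· ∈ M)) = M := Nat.range_nth_of_infinite hM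
  refine ⟨Nat.nth (· ∈ M), Nat.nth_strictMono hM, hrange.symm ▸ hML, i₀, Finset.mem_range.mp hi₀,
    fun s hs hblock => ?_⟩
  have hsD : s ∈ blockSeqs F k := ⟨fun j => (hs j).1, hblock⟩
  have hsM : ↑(cat s) ⊆ M := fun x hx => by
    obtain ⟨j, -, hxj⟩ := Finset.mem_biUnion.mp hx
    exact hrange ▸ (hs j).2 hxj
  rw [← hMi₀ (cat s) (mem_image_of_mem _ hsD) hsM, Function.comp_apply,
    hinj.leftInvOn_invFunOn hsD]

/-- Proposition 28: Ramsey property for block tuples. -/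
theorem statement17 (F : Set (Finset ℕ)) (hF : RegularThin F)
    (L : ℕ → ℕ) (hL : StrictMono L) (k : ℕ) (hk : 1 ≤ k)
    (p : ℕ) (hp : 1 ≤ p) (col : (Fin k → Finset ℕ) → ℕ) (hcol : ∀ s, col s < p) :
    ∃ L' : ℕ → ℕ, StrictMono L' ∧ Set.range L' ⊆ Set.range L ∧
      ∃ i₀ < p, ∀ s : Fin k → Finset ℕ, (∀ j, s j ∈ restrict F L') →
        (∀ i j : Fin k, i < j → ∀ a ∈ s i, ∀ b ∈ s j, a < b) →
        col s = i₀ :=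
  statement17_general F hF L hL k p col hcol
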